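/- Let 0 ≤ e < 1. For every 2π-periodic continuously differentiable function x: ℝ → ℂ, the integral ∫₀^{2π} (|x'(t)|² − (e cos t)/(1 + e cos t)·|x(t)|²) dt is nonnegative, and it equals zero if and only if there exists c ∈ ℂ such that x(t) = c(1 + e cos t) for all t. -/

import Mathlib

/-! With `w t = 1 + e cos t > 0` and `p = w'/w` one has `w''/w = p' + p²` and `w'' = -e cos t`,
and pointwise `|x'|² + (w''/w)|x|² = |x' - p x|² + (p |x|²)'`. Over a period the derivative
integrates to zero, so the form equals `∫ |x' - p x|² ≥ 0`; it vanishes iff `x' = (w'/w) x`,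
i.e. iff `x / w` is constant. -/

open Real MeasureTheory Set intervalIntegral Function

theorem Function.Periodic.deriv {F : Type*} [NormedAddCommGroup F] [NormedSpace ℝ F]
    {f : ℝ → F} {T : ℝ} (hf : Periodic f T) : Periodic (deriv f) T := fun t => by
  rw [← deriv_comp_add_const, funext hf]

theorem Function.Periodic.eq_zero_of_integral_eq_zero {f : ℝ → ℝ} {T : ℝ} (hf : Periodic f T)
    (hT : 0 < T) (hfc : Continuous f) (hf0 : 0 ≤ f) (hint : ∫ t in (0 : ℝ)..T, f t = 0) :
    f = 0 := by
  have hae : f =ᵐ[volume.restrict (Ioc 0 T)] 0 :=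
    (integral_eq_zero_iff_of_le_of_nonneg_ae hT.le (.of_forall hf0)
      (hfc.intervalIntegrable _ _)).1 hint
  have hIoc := Measure.eqOn_Ioc_of_ae_eq _ hae hfc.continuousOn continuousOn_const
  funext t
  obtain ⟨s, hs, hts⟩ := hf.exists_mem_Ioc hT t 0
  rw [hts, hIoc (by simpa using hs)]
  rfl

section

variable {E : Type*} [NormedAddCommGroup E] [InnerProductSpace ℝ E]

theorem norm_sq_add_riccati_mul_norm_sq (x x' : E) (p p' : ℝ) :
    ‖x'‖ ^ 2 + (p' + p ^ 2) * ‖x‖ ^ 2 =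
      ‖x' - p • x‖ ^ 2 + (p' * ‖x‖ ^ 2 + p * (2 * inner ℝ x x')) := by
  rw [norm_sub_sq_real, norm_smul, inner_smul_right, real_inner_comm, Real.norm_eq_abs,
    mul_pow, sq_abs]
  ring

theorem integral_norm_sq_add_riccati_mul_norm_sq {x x' : ℝ → E} {p p' : ℝ → ℝ} {a b : ℝ}
    (hx : ∀ t, HasDerivAt x (x' t) t) (hp : ∀ t, HasDerivAt p (p' t) t)
    (hx'c : Continuous x') (hp'c : Continuous p') (hab : p b * ‖x b‖ ^ 2 = p a * ‖x a‖ ^ 2) :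
    ∫ t in a..b, ‖x' t‖ ^ 2 + (p' t + p t ^ 2) * ‖x t‖ ^ 2 =
      ∫ t in a..b, ‖x' t - p t • x t‖ ^ 2 := by
  have hxc : Continuous x := continuous_iff_continuousAt.2 fun t => (hx t).continuousAt
  have hpc : Continuous p := continuous_iff_continuousAt.2 fun t => (hp t).continuousAt
  have hboundary : ∫ t in a..b, p' t * ‖x t‖ ^ 2 + p t * (2 * inner ℝ (x t) (x' t)) = 0 := by
    rw [integral_eq_sub_of_hasDerivAt (f := fun t => p t * ‖x t‖ ^ 2)
      (fun t _ => (hp t).mul (hx t).norm_sq)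
      (by apply Continuous.intervalIntegrable; fun_prop), hab, sub_self]
  simp_rw [norm_sq_add_riccati_mul_norm_sq]
  rw [intervalIntegral.integral_add (by apply Continuous.intervalIntegrable; fun_prop)
    (by apply Continuous.intervalIntegrable; fun_prop), hboundary, add_zero]

theorem exists_eq_smul_of_hasDerivAt_div_smul {w w' : ℝ → ℝ} {x : ℝ → E}
    (hw : ∀ t, HasDerivAt w (w' t) t) (hw0 : ∀ t, w t ≠ 0)
    (hx : ∀ t, HasDerivAt x ((w' t / w t) • x t) t) : ∃ c : E, ∀ t, x t = w t • c := by
  have hquot : ∀ t, HasDerivAt (fun s => (w s)⁻¹ • x s) 0 t := fun t => by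
    refine (((hw t).inv (hw0 t)).smul (hx t)).congr_deriv ?_
    rw [smul_smul, ← add_smul, Pi.inv_apply]
    field_simp
    simp
  refine ⟨(w 0)⁻¹ • x 0, fun t => ?_⟩
  rw [← is_const_of_deriv_eq_zero (fun s => (hquot s).differentiableAt)
    (fun s => (hquot s).deriv) t 0, smul_smul, mul_inv_cancel₀ (hw0 t), one_smul]

variable {T : ℝ} {w w' w'' : ℝ → ℝ} {x : ℝ → E}

theorem integral_norm_sq_deriv_add_div_mul_norm_sq (hw : ∀ t, HasDerivAt w (w' t) t)
    (hw' : ∀ t, HasDerivAt w' (w'' t) t) (hw''c : Continuous w'') (hw0 : ∀ t, w t ≠ 0)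
    (hwper : Periodic w T) (hw'per : Periodic w' T) (hx : ContDiff ℝ 1 x)
    (hxper : Periodic x T) :
    ∫ t in (0 : ℝ)..T, ‖deriv x t‖ ^ 2 + w'' t / w t * ‖x t‖ ^ 2 =
      ∫ t in (0 : ℝ)..T, ‖deriv x t - (w' t / w t) • x t‖ ^ 2 := by
  have hwc : Continuous w := continuous_iff_continuousAt.2 fun t => (hw t).continuousAt
  have hw'c : Continuous w' := continuous_iff_continuousAt.2 fun t => (hw' t).continuousAt
  have hp : ∀ t, HasDerivAt (fun s => w' s / w s)
      ((w'' t * w t - w' t * w' t) / w t ^ 2) t := fun t => (hw' t).div (hw t) (hw0 t)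
  rw [← integral_norm_sq_add_riccati_mul_norm_sq
    (fun t => ((hx.differentiable one_ne_zero) t).hasDerivAt) hp
    (hx.continuous_deriv le_rfl) (by fun_prop (disch := exact fun t => pow_ne_zero 2 (hw0 t)))
    (by simp only [← hwper 0, ← hw'per 0, ← hxper 0, zero_add])]
  refine integral_congr fun t _ => ?_
  have := hw0 t
  field_simp
  ring

theorem integral_norm_sq_deriv_add_div_mul_norm_sq_nonneg_and_eq_zero_iff (hT : 0 < T)
    (hw : ∀ t, HasDerivAt w (w' t) t) (hw' : ∀ t, HasDerivAt w' (w'' t) t)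
    (hw''c : Continuous w'') (hw0 : ∀ t, w t ≠ 0) (hwper : Periodic w T)
    (hw'per : Periodic w' T) (hx : ContDiff ℝ 1 x) (hxper : Periodic x T) :
    0 ≤ ∫ t in (0 : ℝ)..T, ‖deriv x t‖ ^ 2 + w'' t / w t * ‖x t‖ ^ 2 ∧
      (∫ t in (0 : ℝ)..T, ‖deriv x t‖ ^ 2 + w'' t / w t * ‖x t‖ ^ 2 = 0 ↔
        ∃ c : E, ∀ t, x t = w t • c) := by
  rw [integral_norm_sq_deriv_add_div_mul_norm_sq hw hw' hw''c hw0 hwper hw'per hx hxper]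
  refine ⟨integral_nonneg hT.le fun t _ => by positivity, fun h0 => ?_, ?_⟩
  · have hwc : Continuous w := continuous_iff_continuousAt.2 fun t => (hw t).continuousAt
    have hw'c : Continuous w' := continuous_iff_continuousAt.2 fun t => (hw' t).continuousAt
    have hx'c := hx.continuous_deriv le_rfl
    have hxc := hx.continuous
    have hq := Periodic.eq_zero_of_integral_eq_zero
      (fun t => by simp only [hxper.deriv t, hxper t, hwper t, hw'per t]) hT
      (by fun_prop (disch := exact hw0)) (fun t => by positivity) h0
    refine exists_eq_smul_of_hasDerivAt_div_smul hw hw0 fun t => ?_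
    have hode : deriv x t = (w' t / w t) • x t := by simpa [sub_eq_zero] using congr_fun hq t
    exact hode ▸ ((hx.differentiable one_ne_zero) t).hasDerivAt
  · rintro ⟨c, hc⟩
    have hx' : ∀ t, deriv x t = w' t • c := fun t => by
      rw [funext hc]
      exact ((hw t).smul_const c).deriv
    refine (integral_congr fun t _ => ?_).trans integral_zero
    simp only [hx', hc, smul_smul, div_mul_cancel₀ _ (hw0 t), sub_self, norm_zero]
    norm_num

end

/-- For `0 ≤ e < 1` and `x : ℝ → ℂ` a `2π`-periodic `C¹` function, the quadratic form
`∫₀^{2π} (|x'|² − (e cos t)/(1+e cos t)|x|²) dt` is nonnegative, and vanishes iff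
`x(t) = c(1 + e cos t)` for some constant `c ∈ ℂ`. -/
theorem euler_kepler_form_nonneg (e : ℝ) (he0 : 0 ≤ e) (he1 : e < 1)
    (x : ℝ → ℂ) (hx : ContDiff ℝ 1 x) (hper : ∀ t, x (t + 2 * Real.pi) = x t) :
    (0 ≤ ∫ t in (0 : ℝ)..(2 * Real.pi),
        (‖deriv x t‖ ^ 2 - e * Real.cos t / (1 + e * Real.cos t) * ‖x t‖ ^ 2)) ∧
    ((∫ t in (0 : ℝ)..(2 * Real.pi),
        (‖deriv x t‖ ^ 2 - e * Real.cos t / (1 + e * Real.cos t) * ‖x t‖ ^ 2)) = 0 ↔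
      ∃ c : ℂ, ∀ t : ℝ, x t = c * (1 + e * Real.cos t)) := by
  have hw : ∀ t, HasDerivAt (fun s => 1 + e * cos s) (-(e * sin t)) t := fun t => by
    simpa using ((hasDerivAt_cos t).const_mul e).const_add 1
  have hw' : ∀ t, HasDerivAt (fun s => -(e * sin s)) (-(e * cos t)) t := fun t =>
    ((hasDerivAt_sin t).const_mul e).neg
  have hw0 : ∀ t, 1 + e * cos t ≠ 0 := fun t => by
    nlinarith [neg_one_le_cos t, cos_le_one t]
  have hform := integral_norm_sq_deriv_add_div_mul_norm_sq_nonneg_and_eq_zero_iff two_pi_pos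
    hw hw' (by fun_prop) hw0 (fun t => by simp) (fun t => by simp) hx hper
  have hintegrand : ∀ t, ‖deriv x t‖ ^ 2 - e * cos t / (1 + e * cos t) * ‖x t‖ ^ 2 =
      ‖deriv x t‖ ^ 2 + -(e * cos t) / (1 + e * cos t) * ‖x t‖ ^ 2 := fun t => by ring
  simp only [hintegrand, hform, true_and, Complex.real_smul]
  push_cast
  simp only [mul_comm]
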